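/- arXiv:2408.13323 — 5 statements merged into one kernel-verified Lean document; each statement's English description precedes it below -/
import Mathlib

section
/- Suppose parts (a)–(d) of the Basic Assumption hold. If x^ν ∈ X → x and λ^ν ∈ [0,∞) → λ, then limsup_{ν→∞} μ^ν(x^ν, λ^ν) ≤ μ(x, λ). -/
open Filter Topology Metric Set

attribute [local instance] Classical.propDecidable

noncomputable section

/-- `ℝ^n` with the Euclidean norm. -/
abbrev Rn (n : ℕ) : Type := EuclideanSpace ℝ (Fin n)

variable {n m : ℕ} {Q : Type*} [NormedAddCommGroup Q]

/-- `(x, y)` is feasible in the bilevel problem (P): `x ∈ X` and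
`y ∈ τ-argmin_{z ∈ Y} { g(x,z) | H(x,z) ∈ D }`. -/
def PFeas (X : Set (Rn n)) (Y : Set (Rn m)) (D : Set Q)
    (g : Rn n × Rn m → ℝ) (H : Rn n × Rn m → Q) (τ : ℝ)
    (x : Rn n) (y : Rn m) : Prop :=
  x ∈ X ∧ y ∈ Y ∧ H (x, y) ∈ D ∧
    ∀ z ∈ Y, H (x, z) ∈ D → g (x, y) ≤ g (x, z) + τ

/-- The minimum value `𝔪` of (P). -/
def PVal (X : Set (Rn n)) (Y : Set (Rn m)) (D : Set Q)
    (f : Rn n × Rn m → EReal) (g : Rn n × Rn m → ℝ) (H : Rn n × Rn m → Q)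
    (τ : ℝ) : EReal :=
  ⨅ (x : Rn n) (y : Rn m) (_ : PFeas X Y D g H τ x y), f (x, y)

/-- Optimal solution of (P): feasible, finite objective value attaining `𝔪`. -/
def POpt (X : Set (Rn n)) (Y : Set (Rn m)) (D : Set Q)
    (f : Rn n × Rn m → EReal) (g : Rn n × Rn m → ℝ) (H : Rn n × Rn m → Q)
    (τ : ℝ) (x : Rn n) (y : Rn m) : Prop :=
  PFeas X Y D g H τ x y ∧ f (x, y) ≠ ⊤ ∧ f (x, y) = PVal X Y D f g H τ

/-- Feasibility in the alternative problem (P)^ν with data `Yn, gn, Hn, lamBar, τn`. -/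
def PnuFeas (X : Set (Rn n)) (Y : Set (Rn m)) (D : Set Q) (Yn : Set (Rn m))
    (gn : Rn n × Rn m → ℝ) (Hn : Rn n × Rn m → Q) (lamBar τn : ℝ)
    (x : Rn n) (y : Rn m) (u : Q) (α lam : ℝ) : Prop :=
  x ∈ X ∧ y ∈ Y ∧ α ≤ 0 ∧ 0 ≤ lam ∧ lam ≤ lamBar ∧ Hn (x, y) + u ∈ D ∧
    ∀ z ∈ Yn, gn (x, y) + α ≤ gn (x, z) + lam * infDist (Hn (x, z)) D + τn

/-- Objective function of (P)^ν: `f^ν(x,y) + σ^ν ‖u‖ - θ^ν α`. -/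
def PnuObj (fn : Rn n × Rn m → EReal) (σn θn : ℝ)
    (x : Rn n) (y : Rn m) (u : Q) (α : ℝ) : EReal :=
  fn (x, y) + ((σn * ‖u‖ - θn * α : ℝ) : EReal)

/-- The minimum value `𝔪^ν` of (P)^ν. -/
def PnuVal (X : Set (Rn n)) (Y : Set (Rn m)) (D : Set Q) (Yn : Set (Rn m))
    (fn : Rn n × Rn m → EReal) (gn : Rn n × Rn m → ℝ) (Hn : Rn n × Rn m → Q)
    (σn θn lamBar τn : ℝ) : EReal :=
  ⨅ (x : Rn n) (y : Rn m) (u : Q) (α : ℝ) (lam : ℝ)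
    (_ : PnuFeas X Y D Yn gn Hn lamBar τn x y u α lam),
    PnuObj fn σn θn x y u α

/-- `ε`-optimal solution of (P)^ν: feasible with finite objective value at most `𝔪^ν + ε`. -/
def PnuEps (X : Set (Rn n)) (Y : Set (Rn m)) (D : Set Q) (Yn : Set (Rn m))
    (fn : Rn n × Rn m → EReal) (gn : Rn n × Rn m → ℝ) (Hn : Rn n × Rn m → Q)
    (σn θn lamBar τn ε : ℝ)
    (x : Rn n) (y : Rn m) (u : Q) (α lam : ℝ) : Prop :=
  PnuFeas X Y D Yn gn Hn lamBar τn x y u α lam ∧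
    PnuObj fn σn θn x y u α ≠ ⊤ ∧
    PnuObj fn σn θn x y u α ≤ PnuVal X Y D Yn fn gn Hn σn θn lamBar τn + (ε : EReal)

/-- The value function `V(x,u) = inf_{y ∈ Y} { g(x,y) | H(x,y) + u ∈ D }`. -/
def Vfun (Y : Set (Rn m)) (D : Set Q)
    (g : Rn n × Rn m → ℝ) (H : Rn n × Rn m → Q)
    (x : Rn n) (u : Q) : EReal :=
  ⨅ (y : Rn m) (_ : y ∈ Y ∧ H (x, y) + u ∈ D), (g (x, y) : EReal)

/-- The value function `V` is calm at `x` with penalty threshold `lam`. -/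
def CalmAtWith (Y : Set (Rn m)) (D : Set Q)
    (g : Rn n × Rn m → ℝ) (H : Rn n × Rn m → Q)
    (x : Rn n) (lam : ℝ) : Prop :=
  0 ≤ lam ∧ ∀ u : Q,
    Vfun Y D g H x 0 - ((lam * ‖u‖ : ℝ) : EReal) ≤ Vfun Y D g H x u

/-- The value function `V` is calm at `x`. -/
def CalmAt (Y : Set (Rn m)) (D : Set Q)
    (g : Rn n × Rn m → ℝ) (H : Rn n × Rn m → Q) (x : Rn n) : Prop :=
  ∃ lam : ℝ, CalmAtWith Y D g H x lam

/-- The value function `V` is locally calm at `xbar`. -/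
def LocallyCalmAt (Y : Set (Rn m)) (D : Set Q)
    (g : Rn n × Rn m → ℝ) (H : Rn n × Rn m → Q) (xbar : Rn n) : Prop :=
  ∃ lam ρ : ℝ, 0 ≤ lam ∧ 0 < ρ ∧
    ∀ x ∈ Metric.closedBall xbar ρ, ∀ u : Q,
      Vfun Y D g H x 0 - ((lam * ‖u‖ : ℝ) : EReal) ≤ Vfun Y D g H x u

/-- The penalty-based value function `μ(x,λ) = inf_{y ∈ S} [g(x,y) + λ dist(H(x,y), D)]`. -/
def muSet (S : Set (Rn m)) (D : Set Q)
    (g : Rn n × Rn m → ℝ) (H : Rn n × Rn m → Q)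
    (x : Rn n) (lam : ℝ) : EReal :=
  ⨅ (y : Rn m) (_ : y ∈ S), ((g (x, y) + lam * infDist (H (x, y)) D : ℝ) : EReal)

/-- The Basic Assumption (Assumption 2.1). -/
structure BasicAssumption (X : Set (Rn n)) (Y : Set (Rn m)) (D : Set Q)
    (Yν : ℕ → Set (Rn m))
    (f : Rn n × Rn m → EReal) (fν : ℕ → Rn n × Rn m → EReal)
    (g : Rn n × Rn m → ℝ) (gν : ℕ → Rn n × Rn m → ℝ)
    (H : Rn n × Rn m → Q) (Hν : ℕ → Rn n × Rn m → Q)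
    (σ θ lamBar τν δ η : ℕ → ℝ) : Prop where
  X_nonempty : X.Nonempty
  X_closed : IsClosed X
  Y_nonempty : Y.Nonempty
  Y_closed : IsClosed Y
  D_nonempty : D.Nonempty
  D_closed : IsClosed D
  Yν_nonempty : ∀ ν, (Yν ν).Nonempty
  Yν_subset : ∀ ν, Yν ν ⊆ Y
  Yν_conv : ∀ y : Rn m,
    Tendsto (fun ν => infDist y (Yν ν)) atTop (𝓝 (infDist y Y))
  δ_lim : Tendsto δ atTop (𝓝 0)
  g_err : ∀ ν, ∀ x ∈ X, ∀ y ∈ Y, |gν ν (x, y) - g (x, y)| ≤ δ ν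
  g_cont : ContinuousOn g (X ×ˢ Y)
  η_lim : Tendsto η atTop (𝓝 0)
  H_err : ∀ ν, ∀ x ∈ X, ∀ y ∈ Y,
    |infDist (Hν ν (x, y)) D - infDist (H (x, y)) D| ≤ η ν
  H_cont : ContinuousOn H (X ×ˢ Y)
  f_ne_bot : ∀ p, f p ≠ ⊥
  fν_ne_bot : ∀ ν p, fν ν p ≠ ⊥
  f_limsup : ∀ x ∈ X, ∀ y ∈ Y,
    limsup (fun ν => fν ν (x, y)) atTop ≤ f (x, y)
  f_liminf : ∀ x ∈ X, ∀ y ∈ Y, ∀ (xs : ℕ → Rn n) (ys : ℕ → Rn m),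
    (∀ ν, xs ν ∈ X) → (∀ ν, ys ν ∈ Y) →
    Tendsto xs atTop (𝓝 x) → Tendsto ys atTop (𝓝 y) →
    f (x, y) ≤ liminf (fun ν => fν ν (xs ν, ys ν)) atTop
  σ_nonneg : ∀ ν, 0 ≤ σ ν
  θ_nonneg : ∀ ν, 0 ≤ θ ν
  lamBar_nonneg : ∀ ν, 0 ≤ lamBar ν
  τν_nonneg : ∀ ν, 0 ≤ τν ν
  lamBar_top : Tendsto lamBar atTop atTop
  ση_lim : Tendsto (fun ν => σ ν * η ν) atTop (𝓝 0)
  θlamη_lim : Tendsto (fun ν => θ ν * lamBar ν * η ν) atTop (𝓝 0)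
  θδ_lim : Tendsto (fun ν => θ ν * δ ν) atTop (𝓝 0)

/-- Lemma 5.1: lower approximation of penalty-based value functions,
`limsup μ^ν(x^ν, λ^ν) ≤ μ(x, λ)` whenever `x^ν ∈ X → x` and `λ^ν ∈ [0,∞) → λ`. -/
theorem muNu_limsup_le_mu
    [NormedSpace ℝ Q] [FiniteDimensional ℝ Q]
    (X : Set (Rn n)) (Y : Set (Rn m)) (D : Set Q) (Yν : ℕ → Set (Rn m))
    (g : Rn n × Rn m → ℝ) (gν : ℕ → Rn n × Rn m → ℝ)
    (H : Rn n × Rn m → Q) (Hν : ℕ → Rn n × Rn m → Q)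
    (δ η : ℕ → ℝ)
    -- Basic Assumption (a)
    (hXne : X.Nonempty) (hXc : IsClosed X)
    (hYne : Y.Nonempty) (hYc : IsClosed Y)
    (hDne : D.Nonempty) (hDc : IsClosed D)
    -- Basic Assumption (b)
    (hYνne : ∀ ν, (Yν ν).Nonempty) (hYνY : ∀ ν, Yν ν ⊆ Y)
    (hYνconv : ∀ y : Rn m,
      Tendsto (fun ν => infDist y (Yν ν)) atTop (𝓝 (infDist y Y)))
    -- Basic Assumption (c)
    (hδ : Tendsto δ atTop (𝓝 0))
    (hgerr : ∀ ν, ∀ x ∈ X, ∀ y ∈ Y, |gν ν (x, y) - g (x, y)| ≤ δ ν)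
    (hgcont : ContinuousOn g (X ×ˢ Y))
    -- Basic Assumption (d)
    (hη : Tendsto η atTop (𝓝 0))
    (hHerr : ∀ ν, ∀ x ∈ X, ∀ y ∈ Y,
      |infDist (Hν ν (x, y)) D - infDist (H (x, y)) D| ≤ η ν)
    (hHcont : ContinuousOn H (X ×ˢ Y))
    -- the converging sequences
    (xs : ℕ → Rn n) (hxs : ∀ ν, xs ν ∈ X) (x : Rn n)
    (hx : Tendsto xs atTop (𝓝 x))
    (lams : ℕ → ℝ) (hlams : ∀ ν, 0 ≤ lams ν) (lam : ℝ)
    (hlam : Tendsto lams atTop (𝓝 lam)) :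
    limsup (fun ν => muSet (Yν ν) D (gν ν) (Hν ν) (xs ν) (lams ν)) atTop
      ≤ muSet Y D g H x lam := by
  refine le_iInf fun y => le_iInf fun hy => ?_
  have hxX : x ∈ X := hXc.mem_of_tendsto hx (Filter.Eventually.of_forall hxs)
  -- choose approximating points in `Yν ν`
  have hchoice : ∀ ν : ℕ, ∃ z ∈ Yν ν, dist y z < infDist y (Yν ν) + 1 / (ν + 1) := by
    intro ν
    refine (Metric.infDist_lt_iff (hYνne ν)).mp ?_
    have : (0 : ℝ) < 1 / (ν + 1) := by positivity
    linarith
  choose ys hysYν hysdist using hchoice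
  have hysY : ∀ ν, ys ν ∈ Y := fun ν => hYνY ν (hysYν ν)
  -- ys ν → y
  have hinf0 : Tendsto (fun ν => infDist y (Yν ν)) atTop (𝓝 0) := by
    have := hYνconv y
    rwa [Metric.infDist_zero_of_mem hy] at this
  have hup : Tendsto (fun ν : ℕ => infDist y (Yν ν) + 1 / (ν + 1)) atTop (𝓝 0) := by
    have h2 : Tendsto (fun ν : ℕ => (1 : ℝ) / (ν + 1)) atTop (𝓝 0) :=
      tendsto_one_div_add_atTop_nhds_zero_nat
    simpa using hinf0.add h2
  have hys : Tendsto ys atTop (𝓝 y) := by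
    rw [tendsto_iff_dist_tendsto_zero]
    refine squeeze_zero (fun ν => dist_nonneg) (fun ν => ?_) hup
    rw [dist_comm]
    exact (hysdist ν).le
  -- the pair sequence tends to (x, y) within X ×ˢ Y
  have hpair : Tendsto (fun ν => (xs ν, ys ν)) atTop (𝓝 (x, y)) :=
    hx.prodMk_nhds hys
  have hmem : (x, y) ∈ X ×ˢ Y := ⟨hxX, hy⟩
  have hpairW : Tendsto (fun ν => (xs ν, ys ν)) atTop (𝓝[X ×ˢ Y] (x, y)) :=
    tendsto_nhdsWithin_iff.mpr ⟨hpair, Filter.Eventually.of_forall fun ν => ⟨hxs ν, hysY ν⟩⟩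
  have hgten : Tendsto (fun ν => g (xs ν, ys ν)) atTop (𝓝 (g (x, y))) :=
    (hgcont (x, y) hmem).tendsto.comp hpairW
  have hHten : Tendsto (fun ν => H (xs ν, ys ν)) atTop (𝓝 (H (x, y))) :=
    (hHcont (x, y) hmem).tendsto.comp hpairW
  have hdten : Tendsto (fun ν => infDist (H (xs ν, ys ν)) D) atTop
      (𝓝 (infDist (H (x, y)) D)) :=
    ((continuous_infDist_pt D).tendsto _).comp hHten
  -- the upper bound sequence
  set b : ℕ → ℝ := fun ν =>
    g (xs ν, ys ν) + δ ν + lams ν * (infDist (H (xs ν, ys ν)) D + η ν) with hb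
  have hbten : Tendsto b atTop (𝓝 (g (x, y) + lam * infDist (H (x, y)) D)) := by
    have := ((hgten.add hδ).add (hlam.mul (hdten.add hη)))
    simpa using this
  set a : ℕ → ℝ := fun ν =>
    gν ν (xs ν, ys ν) + lams ν * infDist (Hν ν (xs ν, ys ν)) D with ha
  have hab : ∀ ν, a ν ≤ b ν := by
    intro ν
    have hg' := abs_le.mp (hgerr ν (xs ν) (hxs ν) (ys ν) (hysY ν))
    have hH' := abs_le.mp (hHerr ν (xs ν) (hxs ν) (ys ν) (hysY ν))
    have hmul : lams ν * infDist (Hν ν (xs ν, ys ν)) D ≤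
        lams ν * (infDist (H (xs ν, ys ν)) D + η ν) :=
      mul_le_mul_of_nonneg_left (by linarith [hH'.2]) (hlams ν)
    simp only [ha, hb]
    linarith [hg'.2]
  have hmua : ∀ ν, muSet (Yν ν) D (gν ν) (Hν ν) (xs ν) (lams ν) ≤ ((a ν : ℝ) : EReal) := by
    intro ν
    exact iInf₂_le (ys ν) (hysYν ν)
  calc limsup (fun ν => muSet (Yν ν) D (gν ν) (Hν ν) (xs ν) (lams ν)) atTop
      ≤ limsup (fun ν => ((a ν : ℝ) : EReal)) atTop :=
        limsup_le_limsup (Filter.Eventually.of_forall hmua)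
    _ ≤ limsup (fun ν => ((b ν : ℝ) : EReal)) atTop :=
        limsup_le_limsup (Filter.Eventually.of_forall fun ν =>
          EReal.coe_le_coe_iff.mpr (hab ν))
    _ = ((g (x, y) + lam * infDist (H (x, y)) D : ℝ) : EReal) :=
        (EReal.tendsto_coe.mpr hbten).limsup_eq
end
end

section
/- Let Y ⊂ ℝ^m be nonempty and compact, D ⊂ ℝ^q be nonempty and closed, g : ℝ^n × ℝ^m → ℝ, H : ℝ^n × ℝ^m → ℝ^q, and fix x ∈ ℝ^n such that g(x,·) and H(x,·) are continuous relative to Y. If λ^ν → ∞, then lim_{ν→∞} μ(x, λ^ν) = inf_{y∈Y} { g(x,y) | H(x,y) ∈ D }. -/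
open Filter Topology Metric Set

attribute [local instance] Classical.propDecidable

noncomputable section

variable {n m : ℕ} {Q : Type*} [NormedAddCommGroup Q]

/-- Sublevel sets of a continuous function on a compact set are compact. -/
lemma isCompact_sublevel {α : Type*} [TopologicalSpace α] {S : Set α} (hS : IsCompact S)
    {φ : α → ℝ} (hφ : ContinuousOn φ S) (c : ℝ) : IsCompact {y ∈ S | φ y ≤ c} := by
  haveI : CompactSpace S := isCompact_iff_compactSpace.mp hS
  have h1 : {y ∈ S | φ y ≤ c} = Subtype.val '' {y : S | φ (y : α) ≤ c} := by
    ext y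
    simp only [Set.mem_image, Set.mem_setOf_eq, Subtype.exists, exists_and_right,
      exists_eq_right]
    tauto
  rw [h1]
  have hclosed : IsClosed {y : S | φ (y : α) ≤ c} :=
    IsClosed.preimage (continuousOn_iff_continuous_restrict.mp hφ) isClosed_Iic
  exact (hclosed.isCompact).image continuous_subtype_val

/-- Lemma 5.2(a): vanishing error for the penalty-based value function,
`μ(x, λ^ν) → inf_{y∈Y} { g(x,y) | H(x,y) ∈ D }` as `λ^ν → ∞`. -/
theorem mu_tendsto_constrained_inf
    [NormedSpace ℝ Q] [FiniteDimensional ℝ Q]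
    (Y : Set (Rn m)) (D : Set Q)
    (g : Rn n × Rn m → ℝ) (H : Rn n × Rn m → Q)
    (hYne : Y.Nonempty) (hYcpt : IsCompact Y)
    (hDne : D.Nonempty) (hDc : IsClosed D)
    (x : Rn n)
    (hgcont : ContinuousOn (fun y : Rn m => g (x, y)) Y)
    (hHcont : ContinuousOn (fun y : Rn m => H (x, y)) Y)
    (lams : ℕ → ℝ) (hlams : Tendsto lams atTop atTop) :
    Tendsto (fun ν => muSet Y D g H x (lams ν)) atTop
      (𝓝 (⨅ (y : Rn m) (_ : y ∈ Y ∧ H (x, y) ∈ D), (g (x, y) : EReal))) := by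
  set ψ : Rn m → ℝ := fun y => infDist (H (x, y)) D with hψdef
  have hψcont : ContinuousOn ψ Y := (continuous_infDist_pt D).comp_continuousOn hHcont
  have hψnonneg : ∀ y, 0 ≤ ψ y := fun y => infDist_nonneg
  have hψzero : ∀ y, H (x, y) ∈ D ↔ ψ y = 0 := fun y => hDc.mem_iff_infDist_zero hDne
  -- global minimum of g over Y
  obtain ⟨yM, hyM, hyMmin⟩ := hYcpt.exists_isMinOn hYne hgcont
  set M : ℝ := g (x, yM) with hMdef
  have hM : ∀ y ∈ Y, M ≤ g (x, y) := fun y hy => hyMmin hy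
  by_cases hF : ∃ y ∈ Y, H (x, y) ∈ D
  · -- feasible case
    have hFset : IsCompact {y ∈ Y | ψ y ≤ 0} := isCompact_sublevel hYcpt hψcont 0
    have hFeq : {y ∈ Y | ψ y ≤ 0} = {y ∈ Y | H (x, y) ∈ D} := by
      ext y; simp only [Set.mem_setOf_eq, hψzero]
      exact and_congr_right fun _ => ⟨fun h => le_antisymm h (hψnonneg y), fun h => h.le⟩
    obtain ⟨yF, hyFY, hyFD⟩ := hF
    obtain ⟨y₀, hy₀, hy₀min⟩ := (hFeq ▸ hFset).exists_isMinOn ⟨yF, hyFY, hyFD⟩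
      (hgcont.mono fun y hy => hy.1)
    have hy₀Y : y₀ ∈ Y := hy₀.1
    have hy₀D : H (x, y₀) ∈ D := hy₀.2
    set L : ℝ := g (x, y₀) with hLdef
    have hLmin : ∀ y ∈ Y, H (x, y) ∈ D → L ≤ g (x, y) := fun y hy hD => hy₀min ⟨hy, hD⟩
    have hRHS : (⨅ (y : Rn m) (_ : y ∈ Y ∧ H (x, y) ∈ D), (g (x, y) : EReal)) = (L : EReal) := by
      refine le_antisymm (iInf₂_le y₀ ⟨hy₀Y, hy₀D⟩) (le_iInf₂ fun y hy => ?_)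
      exact EReal.coe_le_coe_iff.mpr (hLmin y hy.1 hy.2)
    rw [hRHS, tendsto_order]
    constructor
    · -- lower bound
      intro b hb
      obtain ⟨r, hbr, hrL⟩ := EReal.exists_between_coe_real hb
      have hrL' : r < L := EReal.coe_lt_coe_iff.mp hrL
      have key : ∃ Λ : ℝ, ∀ lam ≥ Λ, ∀ y ∈ Y, r ≤ g (x, y) + lam * ψ y := by
        by_cases hK : ({y ∈ Y | g (x, y) ≤ r} : Set (Rn m)).Nonempty
        · obtain ⟨y₁, hy₁, hy₁min⟩ := (isCompact_sublevel hYcpt hgcont r).exists_isMinOn hK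
            (hψcont.mono fun y hy => hy.1)
          set c : ℝ := ψ y₁ with hcdef
          have hc : 0 < c := by
            rcases lt_or_eq_of_le (hψnonneg y₁) with h | h
            · exact h
            · exfalso
              have : H (x, y₁) ∈ D := (hψzero y₁).mpr h.symm
              exact absurd (hy₁.2.trans_lt hrL') (not_lt.mpr (hLmin y₁ hy₁.1 this))
          refine ⟨max 0 ((r - M) / c), fun lam hlam y hy => ?_⟩
          have hlam0 : 0 ≤ lam := le_trans (le_max_left _ _) hlam
          by_cases hyr : g (x, y) ≤ r
          · have hyc : c ≤ ψ y := hy₁min ⟨hy, hyr⟩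
            have h1 : r - M ≤ lam * c :=
              (div_le_iff₀ hc).mp (le_trans (le_max_right _ _) hlam)
            have h2 : lam * c ≤ lam * ψ y := mul_le_mul_of_nonneg_left hyc hlam0
            have := hM y hy
            linarith
          · have := mul_nonneg hlam0 (hψnonneg y)
            linarith [not_le.mp hyr]
        · refine ⟨0, fun lam hlam y hy => ?_⟩
          have h1 : r < g (x, y) := not_le.mp fun h => hK ⟨y, hy, h⟩
          have := mul_nonneg hlam (hψnonneg y)
          linarith
      obtain ⟨Λ, hΛ⟩ := key
      filter_upwards [hlams.eventually_ge_atTop Λ] with ν hν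
      refine lt_of_lt_of_le hbr (le_iInf₂ fun y hy => ?_)
      exact EReal.coe_le_coe_iff.mpr (hΛ (lams ν) hν y hy)
    · -- upper bound : μ ≤ L always
      intro b hb
      filter_upwards with ν
      refine lt_of_le_of_lt ?_ hb
      have hterm : (muSet Y D g H x (lams ν) : EReal) ≤
          ((g (x, y₀) + lams ν * ψ y₀ : ℝ) : EReal) := iInf₂_le y₀ hy₀Y
      have : ψ y₀ = 0 := (hψzero y₀).mp hy₀D
      simpa [this] using hterm
  · -- infeasible case
    have hRHS : (⨅ (y : Rn m) (_ : y ∈ Y ∧ H (x, y) ∈ D), (g (x, y) : EReal)) = ⊤ :=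
      top_unique (le_iInf₂ fun y hy => absurd ⟨y, hy.1, hy.2⟩ hF)
    rw [hRHS, EReal.tendsto_nhds_top_iff_real]
    intro r
    obtain ⟨y₁, hy₁, hy₁min⟩ := hYcpt.exists_isMinOn hYne hψcont
    set c : ℝ := ψ y₁ with hcdef
    have hc : 0 < c := by
      rcases lt_or_eq_of_le (hψnonneg y₁) with h | h
      · exact h
      · exact absurd ⟨y₁, hy₁, (hψzero y₁).mpr h.symm⟩ hF
    filter_upwards [hlams.eventually_ge_atTop (max 0 ((r + 1 - M) / c))] with ν hν
    have hlam0 : 0 ≤ lams ν := le_trans (le_max_left _ _) hν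
    refine lt_of_lt_of_le (show (r : EReal) < ((r + 1 : ℝ) : EReal) by
      exact_mod_cast lt_add_one r) (le_iInf₂ fun y hy => ?_)
    refine EReal.coe_le_coe_iff.mpr ?_
    have h1 : r + 1 - M ≤ lams ν * c := (div_le_iff₀ hc).mp (le_trans (le_max_right _ _) hν)
    have h2 : lams ν * c ≤ lams ν * ψ y := mul_le_mul_of_nonneg_left (hy₁min hy) hlam0
    have := hM y hy
    linarith
end
end

section
/- Let Y ⊂ ℝ^m be nonempty and compact, D ⊂ ℝ^q be nonempty and closed, g : ℝ^n × ℝ^m → ℝ, H : ℝ^n × ℝ^m → ℝ^q, and fix x ∈ ℝ^n such that g(x,·) and H(x,·) are continuous relative to Y. If τ ∈ (0,∞) and inf_{y∈Y} { g(x,y) | H(x,y) ∈ D } < ∞, then there exist ȳ ∈ Y and λ ∈ [0,∞) such that H(x,ȳ) ∈ D and g(x,ȳ) ≤ μ(x,λ) + τ. -/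
open Filter Topology Metric Set

attribute [local instance] Classical.propDecidable

noncomputable section

variable {n m : ℕ} {Q : Type*} [NormedAddCommGroup Q]

/-- Lemma 5.2(b): for `τ > 0`, there exist `ȳ ∈ Y` and `λ ∈ [0,∞)` with
`H(x,ȳ) ∈ D` and `g(x,ȳ) ≤ μ(x,λ) + τ`, provided the constrained infimum is `< ∞`. -/
theorem exists_near_optimal_feasible_penalty
    [NormedSpace ℝ Q] [FiniteDimensional ℝ Q]
    (Y : Set (Rn m)) (D : Set Q)
    (g : Rn n × Rn m → ℝ) (H : Rn n × Rn m → Q)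
    (hYne : Y.Nonempty) (hYcpt : IsCompact Y)
    (hDne : D.Nonempty) (hDc : IsClosed D)
    (x : Rn n)
    (hgcont : ContinuousOn (fun y : Rn m => g (x, y)) Y)
    (hHcont : ContinuousOn (fun y : Rn m => H (x, y)) Y)
    (τ : ℝ) (hτ : 0 < τ)
    (hfin : (⨅ (y : Rn m) (_ : y ∈ Y ∧ H (x, y) ∈ D), (g (x, y) : EReal)) ≠ ⊤) :
    ∃ ybar ∈ Y, ∃ lam : ℝ, 0 ≤ lam ∧ H (x, ybar) ∈ D ∧
      (g (x, ybar) : EReal) ≤ muSet Y D g H x lam + (τ : EReal) := by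
  classical
  -- Feasible set
  set F : Set (Rn m) := {y ∈ Y | H (x, y) ∈ D} with hF
  have hFY : F ⊆ Y := fun y hy => hy.1
  have hFne : F.Nonempty := by
    by_contra hemp
    apply hfin
    rw [Set.not_nonempty_iff_eq_empty] at hemp
    have : ∀ y : Rn m, ¬ (y ∈ Y ∧ H (x, y) ∈ D) := by
      intro y hy
      have : y ∈ F := ⟨hy.1, hy.2⟩
      simp [hemp] at this
    simp [iInf_neg, this]
  have hFclosed : IsClosed F := by
    have := hHcont.preimage_isClosed_of_isClosed hYcpt.isClosed hDc
    have he : F = Y ∩ (fun y => H (x, y)) ⁻¹' D := by ext y; simp [hF]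
    rw [he]; exact this
  have hFcpt : IsCompact F := hYcpt.of_isClosed_subset hFclosed hFY
  obtain ⟨ybar, hybarF, hmin⟩ := hFcpt.exists_isMinOn hFne (hgcont.mono hFY)
  -- lower bound for g on Y
  obtain ⟨y0, hy0Y, hlow⟩ := hYcpt.exists_isMinOn hYne hgcont
  set M : ℝ := -(g (x, y0)) with hM
  have hlowY : ∀ y ∈ Y, -M ≤ g (x, y) := by
    intro y hy; simpa [hM] using hlow hy
  refine ⟨ybar, hybarF.1, ?_⟩
  by_contra hcon
  push_neg at hcon
  set c : ℝ := g (x, ybar) - τ with hc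
  -- from contradiction, for every k : ℕ get a point
  have hk : ∀ k : ℕ, ∃ y ∈ Y, g (x, y) + (k : ℝ) * infDist (H (x, y)) D < c := by
    intro k
    have hklt := hcon k (Nat.cast_nonneg k) hybarF.2
    have hlt : muSet Y D g H x (k : ℝ) < ((c : ℝ) : EReal) := by
      rw [hc, EReal.coe_sub]
      rw [EReal.lt_sub_iff_add_lt (Or.inl (EReal.coe_ne_bot τ)) (Or.inl (EReal.coe_ne_top τ))]
      exact hklt
    rw [muSet] at hlt
    rw [iInf_lt_iff] at hlt
    obtain ⟨y, hy⟩ := hlt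
    rw [iInf_lt_iff] at hy
    obtain ⟨hyY, hy⟩ := hy
    exact ⟨y, hyY, by exact_mod_cast hy⟩
  choose ys hysY hysineq using hk
  -- distances tend to 0
  have hdist0 : Tendsto (fun k => infDist (H (x, ys k)) D) atTop (𝓝 0) := by
    apply squeeze_zero' (Filter.Eventually.of_forall fun k => infDist_nonneg)
      (g := fun k : ℕ => (c + M) / (k : ℝ))
    · filter_upwards [Filter.eventually_ge_atTop 1] with k hk1
      have hkpos : (0 : ℝ) < (k : ℝ) := by exact_mod_cast hk1
      rw [le_div_iff₀ hkpos, mul_comm]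
      have h1 := hysineq k
      have h2 := hlowY (ys k) (hysY k)
      linarith
    · exact tendsto_const_div_atTop_nhds_zero_nat (c + M)
  -- subsequence converging in Y
  obtain ⟨ystar, hystarY, φ, hφmono, hφtend⟩ := hYcpt.tendsto_subseq hysY
  -- H(x, ystar) ∈ D
  have hHcont' : Tendsto (fun k => infDist (H (x, ys (φ k))) D) atTop
      (𝓝 (infDist (H (x, ystar)) D)) := by
    have : ContinuousOn (fun y => infDist (H (x, y)) D) Y :=
      continuous_infDist_pt D |>.comp_continuousOn hHcont
    exact (this ystar hystarY).tendsto.comp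
      (tendsto_nhdsWithin_iff.2 ⟨hφtend, Filter.Eventually.of_forall fun k => hysY (φ k)⟩)
  have hdstar : infDist (H (x, ystar)) D = 0 :=
    tendsto_nhds_unique hHcont' (hdist0.comp hφmono.tendsto_atTop)
  have hHD : H (x, ystar) ∈ D := by
    rw [← hDc.closure_eq]
    exact (mem_closure_iff_infDist_zero hDne).2 hdstar
  -- g(x, ystar) ≤ c
  have hgtend : Tendsto (fun k => g (x, ys (φ k))) atTop (𝓝 (g (x, ystar))) :=
    (hgcont ystar hystarY).tendsto.comp
      (tendsto_nhdsWithin_iff.2 ⟨hφtend, Filter.Eventually.of_forall fun k => hysY (φ k)⟩)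
  have hgle : g (x, ystar) ≤ c := by
    apply le_of_tendsto hgtend
    filter_upwards with k
    have h1 := hysineq (φ k)
    have h2 : (0 : ℝ) ≤ (φ k : ℝ) * infDist (H (x, ys (φ k))) D :=
      mul_nonneg (Nat.cast_nonneg _) infDist_nonneg
    linarith
  have : g (x, ybar) ≤ g (x, ystar) := hmin ⟨hystarY, hHD⟩
  rw [hc] at hgle
  linarith
end
end

section
/- Suppose parts (a)–(d) of the Basic Assumption hold and the functions f, f^ν : ℝ^n × ℝ^m → (−∞,∞] satisfy liminf_ν f^ν(x^ν, y^ν) ≥ f(x,y) whenever x^ν ∈ X → x and y^ν ∈ Y → y. If τ^ν ∈ [0,∞) → β and σ^ν, θ^ν → ∞, then liminf_{ν→∞} φ^ν(x^ν, y^ν, u^ν, α^ν, λ^ν) ≥ φ_β(x, y, u, α, λ) whenever (x^ν, y^ν, u^ν, α^ν, λ^ν) → (x, y, u, α, λ). -/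
open Filter Topology Metric Set

attribute [local instance] Classical.propDecidable

noncomputable section

variable {n m : ℕ} {Q : Type*} [NormedAddCommGroup Q]

/-- The extended real-valued representation `φ^ν` of (P)^ν. -/
def phiNu (X : Set (Rn n)) (Y : Set (Rn m)) (D : Set Q) (Yn : Set (Rn m))
    (fn : Rn n × Rn m → EReal) (gn : Rn n × Rn m → ℝ) (Hn : Rn n × Rn m → Q)
    (σn θn lamBar τn : ℝ)
    (x : Rn n) (y : Rn m) (u : Q) (α lam : ℝ) : EReal :=
  if x ∈ X ∧ y ∈ Y ∧ α ≤ 0 ∧ 0 ≤ lam ∧ lam ≤ lamBar ∧ Hn (x, y) + u ∈ D ∧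
      ((gn (x, y) + α : ℝ) : EReal) ≤ muSet Yn D gn Hn x lam + (τn : EReal)
  then fn (x, y) + ((σn * ‖u‖ - θn * α : ℝ) : EReal) else ⊤

/-- The extended real-valued function `φ_β` representing a restriction of (P). -/
def phiBeta (X : Set (Rn n)) (Y : Set (Rn m)) (D : Set Q)
    (f : Rn n × Rn m → EReal) (g : Rn n × Rn m → ℝ) (H : Rn n × Rn m → Q)
    (β : ℝ)
    (x : Rn n) (y : Rn m) (u : Q) (α lam : ℝ) : EReal :=
  if x ∈ X ∧ y ∈ Y ∧ u = 0 ∧ α = 0 ∧ 0 ≤ lam ∧ H (x, y) ∈ D ∧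
      (g (x, y) : EReal) ≤ muSet Y D g H x lam + (β : EReal)
  then f (x, y) else ⊤

/-!
If `φ^ν(w^ν) < c` for infinitely many `ν`, then along those indices the objective `f^ν(x^ν, y^ν)`
is bounded below (liminf property of `f^ν`), so the penalty `σ^ν ‖u^ν‖ - θ^ν α^ν` stays bounded;
since `σ^ν, θ^ν → ∞` this forces `u = 0` and `α = 0`. The remaining constraints of `φ_β` pass to
the limit because `g^ν → g` and `dist(H^ν, D) → dist(H, D)` uniformly, the limits are continuous,
and every `z ∈ Y` is a limit of points of `Y^ν`. Hence `φ_β(w) = f(x, y) ≤ c`.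
-/

theorem tendstoUniformlyOn_of_abs_sub_le {ι α : Type*} {l : Filter ι} {F : ι → α → ℝ}
    {G : α → ℝ} {s : Set α} {δ : ι → ℝ} (hδ : Tendsto δ l (𝓝 0))
    (herr : ∀ i, ∀ p ∈ s, |F i p - G p| ≤ δ i) :
    TendstoUniformlyOn F G l s := by
  refine Metric.tendstoUniformlyOn_iff.2 fun ε hε => ?_
  filter_upwards [hδ.eventually (gt_mem_nhds hε)] with i hi p hp
  rw [Real.dist_eq, abs_sub_comm]
  exact (herr i p hp).trans_lt hi

theorem exists_tendsto_of_infDist_tendsto_zero {α : Type*} [PseudoMetricSpace α]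
    {S : ℕ → Set α} {z : α} (hne : ∀ ν, (S ν).Nonempty)
    (h : Tendsto (fun ν => infDist z (S ν)) atTop (𝓝 0)) :
    ∃ zs : ℕ → α, (∀ ν, zs ν ∈ S ν) ∧ Tendsto zs atTop (𝓝 z) := by
  have hnear : ∀ ν : ℕ, ∃ w ∈ S ν, dist z w < infDist z (S ν) + 1 / (ν + 1) := fun ν =>
    (infDist_lt_iff (hne ν)).1 (lt_add_of_pos_right _ Nat.one_div_pos_of_nat)
  choose zs hzsS hzsd using hnear
  refine ⟨zs, hzsS, tendsto_iff_dist_tendsto_zero.2 ?_⟩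
  refine squeeze_zero (fun ν => dist_nonneg) (fun ν => (dist_comm _ _).trans_le (hzsd ν).le) ?_
  simpa using h.add tendsto_one_div_add_atTop_nhds_zero_nat

theorem eq_zero_of_eventually_mul_le {ι : Type*} {l : Filter ι} [l.NeBot] {σ w : ι → ℝ}
    {W C : ℝ} (hσ : Tendsto σ l atTop) (hw : Tendsto w l (𝓝 W)) (hw0 : ∀ᶠ i in l, 0 ≤ w i)
    (hC : ∀ᶠ i in l, σ i * w i ≤ C) : W = 0 := by
  refine le_antisymm (not_lt.1 fun hW => ?_) (ge_of_tendsto hw hw0)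
  obtain ⟨i, hCi, hgt⟩ := (hC.and ((hσ.atTop_mul_pos hW hw).eventually_gt_atTop C)).exists
  exact hCi.not_gt hgt

theorem eq_zero_and_eq_zero_of_penalty_le {ι E : Type*} [NormedAddCommGroup E]
    {l : Filter ι} [l.NeBot] {σ θ αs : ι → ℝ} {us : ι → E} {u : E} {α C : ℝ}
    (hσ : Tendsto σ l atTop) (hθ : Tendsto θ l atTop)
    (hu : Tendsto us l (𝓝 u)) (hα : Tendsto αs l (𝓝 α)) (hα0 : ∀ᶠ i in l, αs i ≤ 0)
    (hC : ∀ᶠ i in l, σ i * ‖us i‖ - θ i * αs i ≤ C) : u = 0 ∧ α = 0 := by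
  have hσ0 := hσ.eventually_ge_atTop 0
  have hθ0 := hθ.eventually_ge_atTop 0
  constructor
  · refine norm_eq_zero.1 (eq_zero_of_eventually_mul_le (C := C) hσ hu.norm
      (.of_forall fun _ => norm_nonneg _) ?_)
    filter_upwards [hC, hθ0, hα0] with i hCi hθi hαi
    nlinarith
  · refine neg_eq_zero.1 (eq_zero_of_eventually_mul_le (C := C) hθ hα.neg
      (hα0.mono fun _ => neg_nonneg.2) ?_)
    filter_upwards [hC, hσ0] with i hCi hσi
    nlinarith [norm_nonneg (us i)]

theorem exists_neBot_le_eventually_of_frequently {ι : Type*} {f : Filter ι} {p : ι → Prop}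
    (h : ∃ᶠ i in f, p i) : ∃ l ≤ f, l.NeBot ∧ ∀ᶠ i in l, p i :=
  ⟨f ⊓ 𝓟 {i | p i}, inf_le_left, frequently_iff_neBot.1 h, mem_inf_of_right (mem_principal_self _)⟩

section

variable {X : Set (Rn n)} {Y : Set (Rn m)} {D : Set Q} {Yν : ℕ → Set (Rn m)}
  {f : Rn n × Rn m → EReal} {fν : ℕ → Rn n × Rn m → EReal}
  {g : Rn n × Rn m → ℝ} {gν : ℕ → Rn n × Rn m → ℝ}
  {H : Rn n × Rn m → Q} {Hν : ℕ → Rn n × Rn m → Q}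
  {l : Filter ℕ} {xs : ℕ → Rn n} {ys : ℕ → Rn m} {x : Rn n} {y : Rn m}

theorem coe_le_muSet_add_iff {S : Set (Rn m)} {lam τ a : ℝ} :
    (a : EReal) ≤ muSet S D g H x lam + τ ↔
      ∀ z ∈ S, a ≤ g (x, z) + lam * infDist (H (x, z)) D + τ := by
  rw [← EReal.sub_le_iff_le_add (.inl (EReal.coe_ne_bot τ)) (.inl (EReal.coe_ne_top τ)),
    ← EReal.coe_sub, muSet, le_iInf₂_iff]
  refine forall₂_congr fun z _ => ?_
  rw [EReal.coe_le_coe_iff]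
  constructor <;> intro h <;> linarith

theorem phiNu_eq_ite {Yn : Set (Rn m)} {fn : Rn n × Rn m → EReal} {gn : Rn n × Rn m → ℝ}
    {Hn : Rn n × Rn m → Q} {σn θn lamBar τn α lam : ℝ} {u : Q} :
    phiNu X Y D Yn fn gn Hn σn θn lamBar τn x y u α lam =
      if PnuFeas X Y D Yn gn Hn lamBar τn x y u α lam then PnuObj fn σn θn x y u α else ⊤ := by
  simp only [phiNu, PnuFeas, PnuObj, coe_le_muSet_add_iff]
  congr

theorem pnuFeas_and_pnuObj_lt_of_phiNu_lt {Yn : Set (Rn m)} {fn : Rn n × Rn m → EReal}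
    {gn : Rn n × Rn m → ℝ} {Hn : Rn n × Rn m → Q} {σn θn lamBar τn α lam c : ℝ} {u : Q}
    (h : phiNu X Y D Yn fn gn Hn σn θn lamBar τn x y u α lam < c) :
    PnuFeas X Y D Yn gn Hn lamBar τn x y u α lam ∧ PnuObj fn σn θn x y u α < c := by
  rw [phiNu_eq_ite] at h
  split_ifs at h with hfeas
  exacts [⟨hfeas, h⟩, absurd h not_top_lt]

theorem le_pnuObj {fn : Rn n × Rn m → EReal} {σn θn α : ℝ} {u : Q} (hσ : 0 ≤ σn)
    (hθ : 0 ≤ θn) (hα : α ≤ 0) : fn (x, y) ≤ PnuObj fn σn θn x y u α :=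
  le_add_of_nonneg_right (EReal.coe_nonneg.2 (by nlinarith [norm_nonneg u]))

theorem penalty_lt_of_pnuObj_lt {fn : Rn n × Rn m → EReal} {σn θn α b c : ℝ} {u : Q}
    (hb : (b : EReal) < fn (x, y)) (hc : PnuObj fn σn θn x y u α < c) :
    σn * ‖u‖ - θn * α < c - b := by
  have hsum : ((b + (σn * ‖u‖ - θn * α) : ℝ) : EReal) < c :=
    calc ((b + (σn * ‖u‖ - θn * α) : ℝ) : EReal)
        = (b : EReal) + ((σn * ‖u‖ - θn * α : ℝ) : EReal) := EReal.coe_add _ _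
      _ ≤ PnuObj fn σn θn x y u α := by unfold PnuObj; gcongr
      _ < c := hc
  linarith [EReal.coe_lt_coe_iff.1 hsum]

theorem le_liminf_of_eventually_mem
    (hfliminf : ∀ x ∈ X, ∀ y ∈ Y, ∀ (xs : ℕ → Rn n) (ys : ℕ → Rn m),
      (∀ ν, xs ν ∈ X) → (∀ ν, ys ν ∈ Y) →
      Tendsto xs atTop (𝓝 x) → Tendsto ys atTop (𝓝 y) →
      f (x, y) ≤ liminf (fun ν => fν ν (xs ν, ys ν)) atTop)
    (hl : l ≤ atTop) (hx : x ∈ X) (hy : y ∈ Y) (hcx : Tendsto xs atTop (𝓝 x))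
    (hcy : Tendsto ys atTop (𝓝 y)) (hmem : ∀ᶠ ν in l, xs ν ∈ X ∧ ys ν ∈ Y) :
    f (x, y) ≤ liminf (fun ν => fν ν (xs ν, ys ν)) l := by
  -- replace the points outside `X × Y` by the limit, which changes nothing along `l`
  set xs' := fun ν => if xs ν ∈ X then xs ν else x
  set ys' := fun ν => if ys ν ∈ Y then ys ν else y
  have hx' : ∀ ν, xs' ν ∈ X := fun ν => by by_cases h : xs ν ∈ X <;> simp [xs', h, hx]
  have hy' : ∀ ν, ys' ν ∈ Y := fun ν => by by_cases h : ys ν ∈ Y <;> simp [ys', h, hy]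
  calc f (x, y) ≤ liminf (fun ν => fν ν (xs' ν, ys' ν)) atTop :=
        hfliminf x hx y hy xs' ys' hx' hy'
          ((hcx.mono_left inf_le_left).if (tendsto_const_nhds.mono_left inf_le_left))
          ((hcy.mono_left inf_le_left).if (tendsto_const_nhds.mono_left inf_le_left))
    _ ≤ liminf (fun ν => fν ν (xs' ν, ys' ν)) l := liminf_le_liminf_of_le hl
    _ = liminf (fun ν => fν ν (xs ν, ys ν)) l :=
        liminf_congr (hmem.mono fun ν h => by simp [xs', ys', h.1, h.2])

theorem tendsto_apply_of_tendstoUniformlyOn {F : ℕ → Rn n × Rn m → ℝ} {G : Rn n × Rn m → ℝ}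
    (hu : TendstoUniformlyOn F G l (X ×ˢ Y)) (hG : ContinuousOn G (X ×ˢ Y)) (hx : x ∈ X)
    (hy : y ∈ Y) (hcx : Tendsto xs l (𝓝 x)) (hcy : Tendsto ys l (𝓝 y))
    (hmem : ∀ᶠ ν in l, xs ν ∈ X ∧ ys ν ∈ Y) :
    Tendsto (fun ν => F ν (xs ν, ys ν)) l (𝓝 (G (x, y))) :=
  hu.tendsto_comp (hG _ ⟨hx, hy⟩) (tendsto_nhdsWithin_iff.2 ⟨hcx.prodMk_nhds hcy, hmem⟩)

theorem mem_of_eventually_add_mem [l.NeBot] {us : ℕ → Q} (hDc : IsClosed D) (hDne : D.Nonempty)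
    (hdu : TendstoUniformlyOn (fun ν p => infDist (Hν ν p) D) (fun p => infDist (H p) D) l
      (X ×ˢ Y))
    (hdcont : ContinuousOn (fun p => infDist (H p) D) (X ×ˢ Y)) (hx : x ∈ X) (hy : y ∈ Y)
    (hcx : Tendsto xs l (𝓝 x)) (hcy : Tendsto ys l (𝓝 y))
    (hmem : ∀ᶠ ν in l, xs ν ∈ X ∧ ys ν ∈ Y) (hD : ∀ᶠ ν in l, Hν ν (xs ν, ys ν) + us ν ∈ D)
    (hus : Tendsto us l (𝓝 0)) : H (x, y) ∈ D := by
  have hle : ∀ᶠ ν in l, infDist (Hν ν (xs ν, ys ν)) D ≤ ‖us ν‖ :=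
    hD.mono fun ν h => by simpa [dist_eq_norm] using infDist_le_dist_of_mem (x := Hν ν (xs ν, ys ν)) h
  have hzero : infDist (H (x, y)) D ≤ 0 := by
    simpa using le_of_tendsto_of_tendsto
      (tendsto_apply_of_tendstoUniformlyOn hdu hdcont hx hy hcx hcy hmem) hus.norm hle
  exact (hDc.mem_iff_infDist_zero hDne).2 (le_antisymm hzero infDist_nonneg)

theorem le_add_infDist_add_of_tendsto [l.NeBot] {αs lams τs : ℕ → ℝ} {α lam β : ℝ}
    (hl : l ≤ atTop) (hYνne : ∀ ν, (Yν ν).Nonempty) (hYνY : ∀ ν, Yν ν ⊆ Y)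
    (hYνconv : ∀ z : Rn m, Tendsto (fun ν => infDist z (Yν ν)) atTop (𝓝 (infDist z Y)))
    (hgu : TendstoUniformlyOn gν g l (X ×ˢ Y)) (hgcont : ContinuousOn g (X ×ˢ Y))
    (hdu : TendstoUniformlyOn (fun ν p => infDist (Hν ν p) D) (fun p => infDist (H p) D) l
      (X ×ˢ Y))
    (hdcont : ContinuousOn (fun p => infDist (H p) D) (X ×ˢ Y)) (hx : x ∈ X) (hy : y ∈ Y)
    (hcx : Tendsto xs l (𝓝 x)) (hcy : Tendsto ys l (𝓝 y)) (hα : Tendsto αs l (𝓝 α))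
    (hlam : Tendsto lams l (𝓝 lam)) (hτ : Tendsto τs l (𝓝 β))
    (hmem : ∀ᶠ ν in l, xs ν ∈ X ∧ ys ν ∈ Y)
    (hle : ∀ᶠ ν in l, ∀ z ∈ Yν ν, gν ν (xs ν, ys ν) + αs ν ≤
      gν ν (xs ν, z) + lams ν * infDist (Hν ν (xs ν, z)) D + τs ν)
    {z : Rn m} (hz : z ∈ Y) :
    g (x, y) + α ≤ g (x, z) + lam * infDist (H (x, z)) D + β := by
  obtain ⟨zs, hzsY, hzs⟩ := exists_tendsto_of_infDist_tendsto_zero hYνne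
    (by simpa [infDist_zero_of_mem hz] using hYνconv z)
  have hmemz : ∀ᶠ ν in l, xs ν ∈ X ∧ zs ν ∈ Y := hmem.mono fun ν h => ⟨h.1, hYνY ν (hzsY ν)⟩
  have hzsl := hzs.mono_left hl
  refine le_of_tendsto_of_tendsto
    ((tendsto_apply_of_tendstoUniformlyOn hgu hgcont hx hy hcx hcy hmem).add hα)
    (((tendsto_apply_of_tendstoUniformlyOn hgu hgcont hx hz hcx hzsl hmemz).add
      (hlam.mul (tendsto_apply_of_tendstoUniformlyOn hdu hdcont hx hz hcx hzsl hmemz))).add hτ)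
    (hle.mono fun ν h => h _ (hzsY ν))


theorem phiBeta_eq_of_eventually_pnuFeas [l.NeBot] {lamBar τν δ η αs lams : ℕ → ℝ}
    {us : ℕ → Q} {lam β : ℝ} (hl : l ≤ atTop) (hDne : D.Nonempty) (hDc : IsClosed D)
    (hYνne : ∀ ν, (Yν ν).Nonempty) (hYνY : ∀ ν, Yν ν ⊆ Y)
    (hYνconv : ∀ z : Rn m, Tendsto (fun ν => infDist z (Yν ν)) atTop (𝓝 (infDist z Y)))
    (hδ : Tendsto δ atTop (𝓝 0))
    (hgerr : ∀ ν, ∀ x ∈ X, ∀ y ∈ Y, |gν ν (x, y) - g (x, y)| ≤ δ ν)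
    (hgcont : ContinuousOn g (X ×ˢ Y)) (hη : Tendsto η atTop (𝓝 0))
    (hHerr : ∀ ν, ∀ x ∈ X, ∀ y ∈ Y, |infDist (Hν ν (x, y)) D - infDist (H (x, y)) D| ≤ η ν)
    (hHcont : ContinuousOn H (X ×ˢ Y)) (hτ : Tendsto τν atTop (𝓝 β)) (hx : x ∈ X) (hy : y ∈ Y)
    (hcx : Tendsto xs atTop (𝓝 x)) (hcy : Tendsto ys atTop (𝓝 y))
    (hcu : Tendsto us atTop (𝓝 0)) (hcα : Tendsto αs atTop (𝓝 0))
    (hclam : Tendsto lams atTop (𝓝 lam))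
    (hfeas : ∀ᶠ ν in l, PnuFeas X Y D (Yν ν) (gν ν) (Hν ν) (lamBar ν) (τν ν)
      (xs ν) (ys ν) (us ν) (αs ν) (lams ν)) :
    phiBeta X Y D f g H β x y 0 0 lam = f (x, y) := by
  have hmem : ∀ᶠ ν in l, xs ν ∈ X ∧ ys ν ∈ Y := hfeas.mono fun _ h => ⟨h.1, h.2.1⟩
  have hgu : TendstoUniformlyOn gν g l (X ×ˢ Y) :=
    tendstoUniformlyOn_of_abs_sub_le (hδ.mono_left hl) fun ν p hp => hgerr ν _ hp.1 _ hp.2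
  have hdu : TendstoUniformlyOn (fun ν p => infDist (Hν ν p) D) (fun p => infDist (H p) D) l
      (X ×ˢ Y) :=
    tendstoUniformlyOn_of_abs_sub_le (hη.mono_left hl) fun ν p hp => hHerr ν _ hp.1 _ hp.2
  have hdcont := (continuous_infDist_pt D).comp_continuousOn hHcont
  have hlam : 0 ≤ lam := ge_of_tendsto (hclam.mono_left hl) (hfeas.mono fun _ h => h.2.2.2.1)
  have hD := mem_of_eventually_add_mem hDc hDne hdu hdcont hx hy (hcx.mono_left hl)
    (hcy.mono_left hl) hmem (hfeas.mono fun _ h => h.2.2.2.2.2.1) (hcu.mono_left hl)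
  have hμ : (g (x, y) : EReal) ≤ muSet Y D g H x lam + β := coe_le_muSet_add_iff.2 fun z hz => by
    simpa using le_add_infDist_add_of_tendsto hl hYνne hYνY hYνconv hgu hgcont hdu hdcont hx hy
      (hcx.mono_left hl) (hcy.mono_left hl) (hcα.mono_left hl) (hclam.mono_left hl)
      (hτ.mono_left hl) hmem (hfeas.mono fun _ h => h.2.2.2.2.2.2) hz
  exact if_pos ⟨hx, hy, rfl, rfl, hlam, hD, hμ⟩

end

theorem phiNu_liminf_ge_phiBeta_general
    (X : Set (Rn n)) (Y : Set (Rn m)) (D : Set Q) (Yν : ℕ → Set (Rn m))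
    (f : Rn n × Rn m → EReal) (fν : ℕ → Rn n × Rn m → EReal)
    (g : Rn n × Rn m → ℝ) (gν : ℕ → Rn n × Rn m → ℝ)
    (H : Rn n × Rn m → Q) (Hν : ℕ → Rn n × Rn m → Q)
    (σ θ lamBar τν δ η : ℕ → ℝ)
    -- Basic Assumption (a)
    (hXc : IsClosed X) (hYc : IsClosed Y)
    (hDne : D.Nonempty) (hDc : IsClosed D)
    -- Basic Assumption (b)
    (hYνne : ∀ ν, (Yν ν).Nonempty) (hYνY : ∀ ν, Yν ν ⊆ Y)
    (hYνconv : ∀ y : Rn m,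
      Tendsto (fun ν => infDist y (Yν ν)) atTop (𝓝 (infDist y Y)))
    -- Basic Assumption (c)
    (hδ : Tendsto δ atTop (𝓝 0))
    (hgerr : ∀ ν, ∀ x ∈ X, ∀ y ∈ Y, |gν ν (x, y) - g (x, y)| ≤ δ ν)
    (hgcont : ContinuousOn g (X ×ˢ Y))
    -- Basic Assumption (d)
    (hη : Tendsto η atTop (𝓝 0))
    (hHerr : ∀ ν, ∀ x ∈ X, ∀ y ∈ Y,
      |infDist (Hν ν (x, y)) D - infDist (H (x, y)) D| ≤ η ν)
    (hHcont : ContinuousOn H (X ×ˢ Y))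
    -- f, f^ν map into (−∞, ∞] and satisfy the liminf condition
    (hf_bot : ∀ p, f p ≠ ⊥)
    (hfliminf : ∀ x ∈ X, ∀ y ∈ Y, ∀ (xs : ℕ → Rn n) (ys : ℕ → Rn m),
      (∀ ν, xs ν ∈ X) → (∀ ν, ys ν ∈ Y) →
      Tendsto xs atTop (𝓝 x) → Tendsto ys atTop (𝓝 y) →
      f (x, y) ≤ liminf (fun ν => fν ν (xs ν, ys ν)) atTop)
    -- parameters
    (β : ℝ) (hτνβ : Tendsto τν atTop (𝓝 β))
    (hσ : Tendsto σ atTop atTop) (hθ : Tendsto θ atTop atTop)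
    -- the converging sequences
    (xs : ℕ → Rn n) (ys : ℕ → Rn m) (us : ℕ → Q) (αs lams : ℕ → ℝ)
    (x : Rn n) (y : Rn m) (u : Q) (α lam : ℝ)
    (hcx : Tendsto xs atTop (𝓝 x)) (hcy : Tendsto ys atTop (𝓝 y))
    (hcu : Tendsto us atTop (𝓝 u)) (hcα : Tendsto αs atTop (𝓝 α))
    (hclam : Tendsto lams atTop (𝓝 lam)) :
    phiBeta X Y D f g H β x y u α lam ≤
      liminf (fun ν => phiNu X Y D (Yν ν) (fν ν) (gν ν) (Hν ν)
        (σ ν) (θ ν) (lamBar ν) (τν ν) (xs ν) (ys ν) (us ν) (αs ν) (lams ν)) atTop := by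
  refine le_of_forall_gt_imp_ge_of_dense fun c hc => ?_
  obtain ⟨c', hLc', hc'c⟩ := EReal.lt_iff_exists_real_btwn.1 hc
  refine le_trans ?_ hc'c.le
  obtain ⟨l, hl, hlne, hlt⟩ := exists_neBot_le_eventually_of_frequently
    (frequently_lt_of_liminf_lt (by isBoundedDefault) hLc')
  have hfeas := hlt.mono fun ν => pnuFeas_and_pnuObj_lt_of_phiNu_lt
  have hmem : ∀ᶠ ν in l, xs ν ∈ X ∧ ys ν ∈ Y := hfeas.mono fun _ h => ⟨h.1.1, h.1.2.1⟩
  have hx : x ∈ X := hXc.mem_of_tendsto (hcx.mono_left hl) (hmem.mono fun _ h => h.1)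
  have hy : y ∈ Y := hYc.mem_of_tendsto (hcy.mono_left hl) (hmem.mono fun _ h => h.2)
  have hfl := le_liminf_of_eventually_mem hfliminf hl hx hy hcx hcy hmem
  obtain ⟨b, -, hb⟩ := EReal.lt_iff_exists_real_btwn.1 (bot_lt_iff_ne_bot.2 (hf_bot (x, y)))
  obtain ⟨rfl, rfl⟩ : u = 0 ∧ α = 0 := eq_zero_and_eq_zero_of_penalty_le (C := c' - b)
    (hσ.mono_left hl) (hθ.mono_left hl) (hcu.mono_left hl) (hcα.mono_left hl)
    (hfeas.mono fun _ h => h.1.2.2.1) (((eventually_lt_of_lt_liminf (hb.trans_le hfl)).and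
      hfeas).mono fun _ h => (penalty_lt_of_pnuObj_lt h.1 h.2.2).le)
  rw [phiBeta_eq_of_eventually_pnuFeas hl hDne hDc hYνne hYνY hYνconv hδ hgerr hgcont hη hHerr
    hHcont hτνβ hx hy hcx hcy hcu hcα hclam (hfeas.mono fun _ h => h.1)]
  refine hfl.trans (liminf_le_of_frequently_le' (Eventually.frequently ?_))
  filter_upwards [hfeas, (hσ.eventually_ge_atTop 0).filter_mono hl,
    (hθ.eventually_ge_atTop 0).filter_mono hl] with ν h hσν hθν
  exact ((le_pnuObj hσν hθν h.1.2.2.1).trans_lt h.2).le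

/-- Lemma 5.3 (liminf property): `liminf φ^ν(w^ν) ≥ φ_β(w)` whenever `w^ν → w`. -/
theorem phiNu_liminf_ge_phiBeta
    [NormedSpace ℝ Q] [FiniteDimensional ℝ Q]
    (X : Set (Rn n)) (Y : Set (Rn m)) (D : Set Q) (Yν : ℕ → Set (Rn m))
    (f : Rn n × Rn m → EReal) (fν : ℕ → Rn n × Rn m → EReal)
    (g : Rn n × Rn m → ℝ) (gν : ℕ → Rn n × Rn m → ℝ)
    (H : Rn n × Rn m → Q) (Hν : ℕ → Rn n × Rn m → Q)
    (σ θ lamBar τν δ η : ℕ → ℝ)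
    -- Basic Assumption (a)
    (hXne : X.Nonempty) (hXc : IsClosed X)
    (hYne : Y.Nonempty) (hYc : IsClosed Y)
    (hDne : D.Nonempty) (hDc : IsClosed D)
    -- Basic Assumption (b)
    (hYνne : ∀ ν, (Yν ν).Nonempty) (hYνY : ∀ ν, Yν ν ⊆ Y)
    (hYνconv : ∀ y : Rn m,
      Tendsto (fun ν => infDist y (Yν ν)) atTop (𝓝 (infDist y Y)))
    -- Basic Assumption (c)
    (hδ : Tendsto δ atTop (𝓝 0))
    (hgerr : ∀ ν, ∀ x ∈ X, ∀ y ∈ Y, |gν ν (x, y) - g (x, y)| ≤ δ ν)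
    (hgcont : ContinuousOn g (X ×ˢ Y))
    -- Basic Assumption (d)
    (hη : Tendsto η atTop (𝓝 0))
    (hHerr : ∀ ν, ∀ x ∈ X, ∀ y ∈ Y,
      |infDist (Hν ν (x, y)) D - infDist (H (x, y)) D| ≤ η ν)
    (hHcont : ContinuousOn H (X ×ˢ Y))
    -- f, f^ν map into (−∞, ∞] and satisfy the liminf condition
    (hf_bot : ∀ p, f p ≠ ⊥) (hfν_bot : ∀ ν p, fν ν p ≠ ⊥)
    (hfliminf : ∀ x ∈ X, ∀ y ∈ Y, ∀ (xs : ℕ → Rn n) (ys : ℕ → Rn m),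
      (∀ ν, xs ν ∈ X) → (∀ ν, ys ν ∈ Y) →
      Tendsto xs atTop (𝓝 x) → Tendsto ys atTop (𝓝 y) →
      f (x, y) ≤ liminf (fun ν => fν ν (xs ν, ys ν)) atTop)
    -- parameters
    (hσ0 : ∀ ν, 0 ≤ σ ν) (hθ0 : ∀ ν, 0 ≤ θ ν)
    (hlamBar0 : ∀ ν, 0 ≤ lamBar ν)
    (β : ℝ) (hτν0 : ∀ ν, 0 ≤ τν ν) (hτνβ : Tendsto τν atTop (𝓝 β))
    (hσ : Tendsto σ atTop atTop) (hθ : Tendsto θ atTop atTop)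
    -- the converging sequences
    (xs : ℕ → Rn n) (ys : ℕ → Rn m) (us : ℕ → Q) (αs lams : ℕ → ℝ)
    (x : Rn n) (y : Rn m) (u : Q) (α lam : ℝ)
    (hcx : Tendsto xs atTop (𝓝 x)) (hcy : Tendsto ys atTop (𝓝 y))
    (hcu : Tendsto us atTop (𝓝 u)) (hcα : Tendsto αs atTop (𝓝 α))
    (hclam : Tendsto lams atTop (𝓝 lam)) :
    phiBeta X Y D f g H β x y u α lam ≤
      liminf (fun ν => phiNu X Y D (Yν ν) (fν ν) (gν ν) (Hν ν)
        (σ ν) (θ ν) (lamBar ν) (τν ν) (xs ν) (ys ν) (us ν) (αs ν) (lams ν)) atTop :=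
  phiNu_liminf_ge_phiBeta_general X Y D Yν f fν g gν H Hν σ θ lamBar τν δ η hXc hYc hDne hDc hYνne
    hYνY hYνconv hδ hgerr hgcont hη hHerr hHcont hf_bot hfliminf β hτνβ hσ hθ xs ys us αs lams x y u
    α lam hcx hcy hcu hcα hclam
end
end

section
/- Suppose there exists an optimal solution (x*, y*) of (P) such that the value function V is calm at x*. Then inf φ_τ = 𝔪 and 𝔪 is a real number, where 𝔪 is the minimum value of (P). -/
open Filter Topology Metric Set

attribute [local instance] Classical.propDecidable

noncomputable section

variable {n m : ℕ} {Q : Type*} [NormedAddCommGroup Q]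

/-- `inf φ_τ`, the infimum of `φ_τ` over all `(x, y, u, α, λ)`. -/
def phiBetaInf (X : Set (Rn n)) (Y : Set (Rn m)) (D : Set Q)
    (f : Rn n × Rn m → EReal) (g : Rn n × Rn m → ℝ) (H : Rn n × Rn m → Q)
    (β : ℝ) : EReal :=
  ⨅ (x : Rn n) (y : Rn m) (u : Q) (α : ℝ) (lam : ℝ),
    phiBeta X Y D f g H β x y u α lam

/-!
Calmness of `V` at `x*` with modulus `λ` gives `V(x*,0) ≤ μ(x*,λ)`: every `y ∈ Y` is feasible
for the perturbation `u = a - H(x*,y)` with `a ∈ D`, so `V(x*,0) ≤ g(x*,y) + λ‖H(x*,y) - a‖`, and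
`a` may be taken as close to `H(x*,y)` as `dist(H(x*,y), D)` allows. Since `y*` is `τ`-optimal,
`g(x*,y*) ≤ V(x*,0) + τ ≤ μ(x*,λ) + τ`, so `(x*,y*,0,0,λ)` lies in the domain of `φ_τ` and
`inf φ_τ ≤ 𝔪`. Conversely every point of the domain of `φ_τ` is feasible for (P), because
`μ(x,λ) ≤ g(x,z)` whenever `H(x,z) ∈ D`.
-/

theorem le_mul_infDist {E : Type*} [PseudoMetricSpace E] {x : E} {s : Set E} {c lam : ℝ}
    (hs : s.Nonempty) (hlam : 0 ≤ lam) (h : ∀ a ∈ s, c ≤ lam * dist x a) :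
    c ≤ lam * infDist x s := by
  have := hs.to_subtype
  rw [infDist_eq_iInf, Real.mul_iInf_of_nonneg hlam]
  exact le_ciInf fun a => h a a.2

section

variable {X : Set (Rn n)} {Y : Set (Rn m)} {D : Set Q} {f : Rn n × Rn m → EReal}
  {g : Rn n × Rn m → ℝ} {H : Rn n × Rn m → Q} {x : Rn n} {y z : Rn m} {lam β : ℝ}

theorem CalmAtWith.Vfun_zero_le_add_dist (hcalm : CalmAtWith Y D g H x lam) (hy : y ∈ Y) {a : Q}
    (ha : a ∈ D) : Vfun Y D g H x 0 ≤ ((g (x, y) + lam * dist (H (x, y)) a : ℝ) : EReal) := by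
  have hVu : Vfun Y D g H x (a - H (x, y)) ≤ g (x, y) :=
    iInf₂_le y ⟨hy, by rwa [add_sub_cancel]⟩
  have hV := (hcalm.2 (a - H (x, y))).trans hVu
  rw [EReal.sub_le_iff_le_add (.inl (EReal.coe_ne_bot _)) (.inl (EReal.coe_ne_top _))] at hV
  rwa [dist_eq_norm, norm_sub_rev, EReal.coe_add]

theorem CalmAtWith.Vfun_zero_le_muSet (hcalm : CalmAtWith Y D g H x lam) (hD : D.Nonempty) :
    Vfun Y D g H x 0 ≤ muSet Y D g H x lam := by
  refine le_iInf₂ fun y hy => EReal.ge_of_forall_gt_iff_ge.mp fun r hr => ?_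
  have hr_le : ∀ a ∈ D, r - g (x, y) ≤ lam * dist (H (x, y)) a := fun a ha => by
    have := EReal.coe_lt_coe_iff.mp (hr.trans_le (hcalm.Vfun_zero_le_add_dist hy ha))
    linarith
  have := le_mul_infDist hD hcalm.1 hr_le
  exact EReal.coe_le_coe_iff.mpr (by linarith)

theorem muSet_le_of_mem {S : Set (Rn m)} (hz : z ∈ S) (hHz : H (x, z) ∈ D) :
    muSet S D g H x lam ≤ g (x, z) :=
  (iInf₂_le z hz).trans_eq (by rw [infDist_zero_of_mem hHz, mul_zero, add_zero])

theorem PFeas.coe_sub_le_Vfun_zero (hfeas : PFeas X Y D g H β x y) :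
    (g (x, y) : EReal) - β ≤ Vfun Y D g H x 0 :=
  le_iInf₂ fun z ⟨hz, hHz⟩ => by
    rw [← EReal.coe_sub, EReal.coe_le_coe_iff]
    have := hfeas.2.2.2 z hz (by rwa [add_zero] at hHz)
    linarith

theorem PFeas.of_le_muSet_add (hx : x ∈ X) (hy : y ∈ Y) (hH : H (x, y) ∈ D)
    (hμ : (g (x, y) : EReal) ≤ muSet Y D g H x lam + β) : PFeas X Y D g H β x y :=
  ⟨hx, hy, hH, fun z hz hHz => by
    have := hμ.trans (add_le_add_left (muSet_le_of_mem hz hHz) _)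
    rwa [← EReal.coe_add, EReal.coe_le_coe_iff] at this⟩

theorem PVal_le_phiBetaInf : PVal X Y D f g H β ≤ phiBetaInf X Y D f g H β := by
  refine le_iInf fun x => le_iInf fun y => le_iInf fun u => le_iInf fun α => le_iInf fun lam => ?_
  unfold phiBeta
  split_ifs with h
  · obtain ⟨hx, hy, -, -, -, hH, hμ⟩ := h
    exact iInf₂_le_of_le x y (iInf_le _ (PFeas.of_le_muSet_add hx hy hH hμ))
  · exact le_top

theorem phiBetaInf_le_of_calmAtWith (hD : D.Nonempty) (hfeas : PFeas X Y D g H β x y)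
    (hcalm : CalmAtWith Y D g H x lam) : phiBetaInf X Y D f g H β ≤ f (x, y) := by
  have hμ : (g (x, y) : EReal) ≤ muSet Y D g H x lam + β :=
    (EReal.sub_le_iff_le_add (.inl (EReal.coe_ne_bot _)) (.inl (EReal.coe_ne_top _))).mp
      (hfeas.coe_sub_le_Vfun_zero.trans (hcalm.Vfun_zero_le_muSet hD))
  calc phiBetaInf X Y D f g H β ≤ phiBeta X Y D f g H β x y 0 0 lam :=
        iInf₂_le_of_le x y (iInf₂_le_of_le 0 0 (iInf_le _ lam))
    _ = f (x, y) := if_pos ⟨hfeas.1, hfeas.2.1, rfl, rfl, hcalm.1, hfeas.2.2.1, hμ⟩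

end

theorem phiTau_inf_eq_PVal_general
    (X : Set (Rn n)) (Y : Set (Rn m)) (D : Set Q)
    (f : Rn n × Rn m → EReal) (g : Rn n × Rn m → ℝ) (H : Rn n × Rn m → Q)
    (τ : ℝ)
    (hDne : D.Nonempty)
    (hf_bot : ∀ p, f p ≠ ⊥)
    (xstar : Rn n) (ystar : Rn m)
    (hopt : POpt X Y D f g H τ xstar ystar)
    (hcalm : CalmAt Y D g H xstar) :
    phiBetaInf X Y D f g H τ = PVal X Y D f g H τ ∧
    ∃ r : ℝ, PVal X Y D f g H τ = (r : EReal) := by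
  obtain ⟨hfeas, hf_top, hf_val⟩ := hopt
  obtain ⟨lam, hlam⟩ := hcalm
  refine ⟨le_antisymm (hf_val ▸ phiBetaInf_le_of_calmAtWith hDne hfeas hlam) PVal_le_phiBetaInf,
    (f (xstar, ystar)).toReal, ?_⟩
  rw [← hf_val, EReal.coe_toReal hf_top (hf_bot _)]

/-- Lemma 5.5(a): under calmness at an optimal solution of (P), `inf φ_τ = 𝔪 ∈ ℝ`. -/
theorem phiTau_inf_eq_PVal
    [NormedSpace ℝ Q] [FiniteDimensional ℝ Q]
    (X : Set (Rn n)) (Y : Set (Rn m)) (D : Set Q)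
    (f : Rn n × Rn m → EReal) (g : Rn n × Rn m → ℝ) (H : Rn n × Rn m → Q)
    (τ : ℝ) (hτ : 0 ≤ τ)
    (hXne : X.Nonempty) (hYne : Y.Nonempty) (hDne : D.Nonempty)
    (hf_bot : ∀ p, f p ≠ ⊥)
    (xstar : Rn n) (ystar : Rn m)
    (hopt : POpt X Y D f g H τ xstar ystar)
    (hcalm : CalmAt Y D g H xstar) :
    phiBetaInf X Y D f g H τ = PVal X Y D f g H τ ∧
    ∃ r : ℝ, PVal X Y D f g H τ = (r : EReal) :=
  phiTau_inf_eq_PVal_general X Y D f g H τ hDne hf_bot xstar ystar hopt hcalm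
end
end
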